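/- arXiv:2111.07111 — 2 statements merged into one kernel-verified Lean document; each statement's English description precedes it below -/
import Mathlib

section
/- For every complex-valued function g that is three times continuously differentiable on [0,1] and satisfies g(0) = g(1) = 0, one has |(d/dr)(r·g(r))(1)| ≤ 2·√3·(∫₀¹ |g(r)|²·r dr)^{1/8}·(∫₀¹ |(𝓛g)(r)|²·r dr)^{3/8}, where the second integral is allowed to be +∞ (in which case the inequality holds trivially). (Lemma A.2, estimate (estLinfty1).) -/
/-!
Because `r² 𝓛g = (r² g' - r g)'` and `(r g)'(1) = g'(1)` when `g(1) = 0`, integrating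
`r² 𝓛g` against `1` over `[0, 1]`, and against `(r - a)² / 2` over `[a, 1]`, expresses `g'(1)`
through `𝓛g` and `g`. Cauchy–Schwarz with the weight `r` then gives `|g'(1)| ≤ ‖𝓛g‖` and, for
`a = 1 - t²`, `|g'(1)| ≤ 8 ‖g‖ / t³ + t ‖𝓛g‖` (weighted `L²` norms). Optimising in `t` produces
the exponents `1/8` and `3/8`.
-/

open MeasureTheory Filter

/-- One-sided derivative on `(0,1]`. -/
noncomputable def dz (g : ℝ → ℂ) : ℝ → ℂ := derivWithin g (Set.Ioc 0 1)

/-- The operator `(𝓛 g)(r) = g''(r) + (1/r) g'(r) − (1/r²) g(r)`. -/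
noncomputable def Lop (g : ℝ → ℂ) : ℝ → ℂ := fun r =>
  dz (dz g) r + ((r : ℂ))⁻¹ * dz g r - (((r : ℂ)) ^ 2)⁻¹ * g r

/-- Weighted integral over `(0,1)` with values in `[0,∞]`. -/
noncomputable def wInt (h : ℝ → ℝ) : ENNReal :=
  ∫⁻ r in Set.Ioo (0 : ℝ) 1, ENNReal.ofReal (h r)

open Set Topology

lemma Ioc_eventuallyEq_Icc {a b r : ℝ} (hr : a < r) : Ioc a b =ᶠ[𝓝 r] Icc a b := by
  filter_upwards [Ioi_mem_nhds hr] with y hy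
  exact propext ⟨fun h => ⟨h.1.le, h.2⟩, fun h => ⟨hy, h.2⟩⟩

lemma dz_eq_derivWithin_Icc (g : ℝ → ℂ) {r : ℝ} (hr : 0 < r) :
    dz g r = derivWithin g (Icc 0 1) r :=
  derivWithin_congr_set (Ioc_eventuallyEq_Icc hr)

lemma Lop_eq_derivWithin_Icc (g : ℝ → ℂ) {r : ℝ} (hr : r ∈ Ioc (0 : ℝ) 1) :
    Lop g r = derivWithin (derivWithin g (Icc 0 1)) (Icc 0 1) r
      + (r : ℂ)⁻¹ * derivWithin g (Icc 0 1) r - ((r : ℂ) ^ 2)⁻¹ * g r := by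
  have hdz : dz (dz g) r = derivWithin (derivWithin g (Icc 0 1)) (Icc 0 1) r :=
    (derivWithin_congr (f := derivWithin g (Icc 0 1)) (fun y hy => dz_eq_derivWithin_Icc g hy.1)
      (dz_eq_derivWithin_Icc g hr.1)).trans (derivWithin_congr_set (Ioc_eventuallyEq_Icc hr.1))
  rw [Lop, hdz, dz_eq_derivWithin_Icc g hr.1]

lemma dz_ofReal_mul_one {g : ℝ → ℂ} (hg : DifferentiableWithinAt ℝ g (Icc 0 1) 1)
    (h1 : g 1 = 0) : dz (fun s => (s : ℂ) * g s) 1 = derivWithin g (Icc 0 1) 1 := by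
  have hcoe : HasDerivWithinAt (fun s : ℝ => (s : ℂ)) 1 (Icc 0 1) 1 :=
    (hasDerivAt_id (1 : ℝ)).ofReal_comp.hasDerivWithinAt
  have hprod : HasDerivWithinAt (fun s : ℝ => (s : ℂ) * g s) _ (Icc 0 1) 1 :=
    hcoe.mul hg.hasDerivWithinAt
  rw [dz_eq_derivWithin_Icc _ one_pos, hprod.derivWithin (uniqueDiffOn_Icc one_pos 1 (by simp)), h1]
  simp

/-- `r² 𝓛g`, in a form that is continuous up to `r = 0`. -/
noncomputable def eulerOp (g : ℝ → ℂ) (s : ℝ) : ℂ :=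
  (s : ℂ) ^ 2 * derivWithin (derivWithin g (Icc 0 1)) (Icc 0 1) s
    + s * derivWithin g (Icc 0 1) s - g s

noncomputable def eulerPrimitive (g : ℝ → ℂ) (s : ℝ) : ℂ :=
  (s : ℂ) ^ 2 * derivWithin g (Icc 0 1) s - s * g s

lemma eulerOp_eq_sq_mul_Lop (g : ℝ → ℂ) {s : ℝ} (hs : s ∈ Ioc (0 : ℝ) 1) :
    eulerOp g s = (s : ℂ) ^ 2 * Lop g s := by
  have hs0 : (s : ℂ) ≠ 0 := Complex.ofReal_ne_zero.2 hs.1.ne'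
  rw [Lop_eq_derivWithin_Icc g hs, eulerOp]
  field_simp

lemma hasDerivAt_derivWithin_Icc {E : Type*} [NormedAddCommGroup E] [NormedSpace ℝ E]
    {f : ℝ → E} {a b s : ℝ} (hf : DifferentiableOn ℝ f (Icc a b)) (hs : s ∈ Ioo a b) :
    HasDerivAt f (derivWithin f (Icc a b) s) s :=
  (hf s (Ioo_subset_Icc_self hs)).hasDerivWithinAt.hasDerivAt (Icc_mem_nhds hs.1 hs.2)

section Regularity

variable {g : ℝ → ℂ} (hg : ContDiffOn ℝ 2 g (Icc 0 1))
include hg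

lemma continuousOn_derivWithin_Icc : ContinuousOn (derivWithin g (Icc 0 1)) (Icc 0 1) :=
  hg.continuousOn_derivWithin (uniqueDiffOn_Icc one_pos) (by norm_num)

lemma continuousOn_derivWithin_derivWithin_Icc :
    ContinuousOn (derivWithin (derivWithin g (Icc 0 1)) (Icc 0 1)) (Icc 0 1) :=
  (hg.derivWithin (uniqueDiffOn_Icc one_pos) (m := 1) (by norm_num)).continuousOn_derivWithin
    (uniqueDiffOn_Icc one_pos) le_rfl

lemma continuousOn_eulerOp : ContinuousOn (eulerOp g) (Icc 0 1) := by
  unfold eulerOp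
  have := continuousOn_derivWithin_Icc hg
  have := continuousOn_derivWithin_derivWithin_Icc hg
  have := hg.continuousOn
  fun_prop

lemma continuousOn_Lop : ContinuousOn (Lop g) (Ioc 0 1) := by
  refine ContinuousOn.congr (f := fun s : ℝ => ((s : ℂ) ^ 2)⁻¹ * eulerOp g s) ?_ fun s hs => ?_
  · refine ContinuousOn.mul ?_ ((continuousOn_eulerOp hg).mono Ioc_subset_Icc_self)
    exact (Complex.continuous_ofReal.pow 2).continuousOn.inv₀
      fun s hs => pow_ne_zero 2 (Complex.ofReal_ne_zero.2 hs.1.ne')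
  · have hs0 : (s : ℂ) ≠ 0 := Complex.ofReal_ne_zero.2 hs.1.ne'
    simp only [eulerOp_eq_sq_mul_Lop g hs]
    field_simp

lemma continuousOn_eulerPrimitive : ContinuousOn (eulerPrimitive g) (Icc 0 1) := by
  unfold eulerPrimitive
  have := continuousOn_derivWithin_Icc hg
  have := hg.continuousOn
  fun_prop

lemma hasDerivAt_eulerPrimitive {s : ℝ} (hs : s ∈ Ioo (0 : ℝ) 1) :
    HasDerivAt (eulerPrimitive g) (eulerOp g s) s := by
  have hg' := hasDerivAt_derivWithin_Icc (hg.differentiableOn (by norm_num)) hs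
  have hg'' := hasDerivAt_derivWithin_Icc
    ((hg.derivWithin (uniqueDiffOn_Icc one_pos) (m := 1) (by norm_num)).differentiableOn
      one_ne_zero) hs
  have hs2 : HasDerivAt (fun s : ℝ => (s : ℂ) ^ 2) (2 * s) s := by
    simpa using (hasDerivAt_pow 2 (s : ℂ)).comp_ofReal
  have hs1 : HasDerivAt (fun s : ℝ => (s : ℂ)) 1 s := (hasDerivAt_id s).ofReal_comp
  exact ((hs2.mul hg'').sub (hs1.mul hg')).congr_deriv (by rw [eulerOp]; ring)

end Regularity

noncomputable def localizedIntegrand (g : ℝ → ℂ) (a s : ℝ) : ℂ :=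
  ((s : ℂ) - a) ^ 2 / 2 * eulerOp g s - s * (4 * s - 3 * a) * g s

section Identities

variable {g : ℝ → ℂ} (hg : ContDiffOn ℝ 2 g (Icc 0 1)) (h1 : g 1 = 0)
include hg h1

lemma integral_eulerOp : ∫ s in (0 : ℝ)..1, eulerOp g s = derivWithin g (Icc 0 1) 1 := by
  rw [intervalIntegral.integral_eq_sub_of_hasDerivAt_of_le zero_le_one
    (continuousOn_eulerPrimitive hg) (fun s hs => hasDerivAt_eulerPrimitive hg hs)
    ((continuousOn_eulerOp hg).intervalIntegrable_of_Icc zero_le_one)]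
  simp [eulerPrimitive, h1]

/-- Integrating `eulerOp g = (eulerPrimitive g)'` twice by parts against `(s - a)² / 2`,
which vanishes to second order at `a`. -/
lemma integral_localizedIntegrand {a : ℝ} (ha : a ∈ Ico (0 : ℝ) 1) :
    ∫ s in a..1, localizedIntegrand g a s = ((1 : ℂ) - a) ^ 2 / 2 * derivWithin g (Icc 0 1) 1 := by
  have hsub : Icc a 1 ⊆ Icc 0 1 := Icc_subset_Icc_left ha.1
  have hcont : ContinuousOn (fun s : ℝ => ((s : ℂ) - a) ^ 2 / 2 * eulerPrimitive g s
      - (s : ℂ) ^ 2 * (s - a) * g s) (Icc a 1) := by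
    have := (continuousOn_eulerPrimitive hg).mono hsub
    have := hg.continuousOn.mono hsub
    fun_prop
  have hderiv : ∀ s ∈ Ioo a 1, HasDerivAt (fun s : ℝ => ((s : ℂ) - a) ^ 2 / 2 * eulerPrimitive g s
      - (s : ℂ) ^ 2 * (s - a) * g s) (localizedIntegrand g a s) s := by
    intro s hs
    have hs01 : s ∈ Ioo (0 : ℝ) 1 := ⟨ha.1.trans_lt hs.1, hs.2⟩
    have hg' := hasDerivAt_derivWithin_Icc (hg.differentiableOn (by norm_num)) hs01
    have hψ := hasDerivAt_eulerPrimitive hg hs01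
    have hq : HasDerivAt (fun s : ℝ => ((s : ℂ) - a) ^ 2 / 2) ((s : ℂ) - a) s := by
      simpa using ((((hasDerivAt_id (s : ℂ)).sub_const (a : ℂ)).pow 2).div_const 2).comp_ofReal
    have hc : HasDerivAt (fun s : ℝ => (s : ℂ) ^ 2 * (s - a)) (3 * (s : ℂ) ^ 2 - 2 * a * s) s := by
      have := ((hasDerivAt_id (s : ℂ)).pow 2).mul ((hasDerivAt_id (s : ℂ)).sub_const (a : ℂ))
      exact this.comp_ofReal.congr_deriv (by simp; ring)
    refine ((hq.mul hψ).sub (hc.mul hg')).congr_deriv ?_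
    simp only [localizedIntegrand, eulerPrimitive]
    ring
  have hint : IntervalIntegrable (localizedIntegrand g a) volume a 1 := by
    refine ContinuousOn.intervalIntegrable_of_Icc ha.2.le ?_
    have := (continuousOn_eulerOp hg).mono hsub
    have := hg.continuousOn.mono hsub
    unfold localizedIntegrand
    fun_prop
  rw [intervalIntegral.integral_eq_sub_of_hasDerivAt_of_le ha.2.le hcont hderiv hint]
  simp [eulerPrimitive, h1]

end Identities

lemma setLIntegral_ofReal_mul_le {S : Set ℝ} (hSm : MeasurableSet S) {u v : ℝ → ℝ}
    (hu : AEMeasurable u (volume.restrict S)) (hv : AEMeasurable v (volume.restrict S))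
    {c ℓ : ℝ} (hc : 0 ≤ c) (hℓ : 0 ≤ ℓ) (hu_le : ∀ x ∈ S, |u x| ≤ c)
    (hS : volume S ≤ ENNReal.ofReal (ℓ ^ 2)) :
    ∫⁻ x in S, ENNReal.ofReal (u x * v x)
      ≤ ENNReal.ofReal (c * ℓ) * (∫⁻ x in S, ENNReal.ofReal (v x ^ 2)) ^ (1 / 2 : ℝ) := by
  have hsq : ∀ w : ℝ → ℝ, ∀ x, ENNReal.ofReal |w x| ^ (2 : ℝ) = ENNReal.ofReal (w x ^ 2) :=
    fun w x => by
      rw [ENNReal.rpow_two, ← ENNReal.ofReal_pow (abs_nonneg _), sq_abs]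
  have hu_sq : ∫⁻ x in S, ENNReal.ofReal |u x| ^ (2 : ℝ) ≤ ENNReal.ofReal ((c * ℓ) ^ 2) :=
    calc ∫⁻ x in S, ENNReal.ofReal |u x| ^ (2 : ℝ)
        ≤ ∫⁻ _ in S, ENNReal.ofReal (c ^ 2) :=
          setLIntegral_mono' hSm fun x hx => by
            rw [hsq]
            exact ENNReal.ofReal_le_ofReal (sq_le_sq' (neg_le_of_abs_le (hu_le x hx))
              (le_of_abs_le (hu_le x hx)))
      _ = ENNReal.ofReal (c ^ 2) * volume S := setLIntegral_const S _
      _ ≤ ENNReal.ofReal (c ^ 2) * ENNReal.ofReal (ℓ ^ 2) := mul_le_mul_right hS _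
      _ = ENNReal.ofReal ((c * ℓ) ^ 2) := by rw [← ENNReal.ofReal_mul (by positivity), mul_pow]
  calc ∫⁻ x in S, ENNReal.ofReal (u x * v x)
      ≤ ∫⁻ x in S, ENNReal.ofReal |u x| * ENNReal.ofReal |v x| :=
        lintegral_mono fun x => by
          rw [← ENNReal.ofReal_mul (abs_nonneg _), ← abs_mul]
          exact ENNReal.ofReal_le_ofReal (le_abs_self _)
    _ ≤ (∫⁻ x in S, ENNReal.ofReal |u x| ^ (2 : ℝ)) ^ (1 / 2 : ℝ)
          * (∫⁻ x in S, ENNReal.ofReal |v x| ^ (2 : ℝ)) ^ (1 / 2 : ℝ) :=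
        ENNReal.lintegral_mul_le_Lp_mul_Lq _ Real.HolderConjugate.two_two
          (ENNReal.measurable_ofReal.comp_aemeasurable hu.abs)
          (ENNReal.measurable_ofReal.comp_aemeasurable hv.abs)
    _ ≤ ENNReal.ofReal (c * ℓ) * (∫⁻ x in S, ENNReal.ofReal (v x ^ 2)) ^ (1 / 2 : ℝ) := by
        simp only [hsq]
        gcongr
        calc (∫⁻ x in S, ENNReal.ofReal (u x ^ 2)) ^ (1 / 2 : ℝ)
            ≤ ENNReal.ofReal ((c * ℓ) ^ 2) ^ (1 / 2 : ℝ) := by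
              gcongr
              simpa only [hsq] using hu_sq
          _ = ENNReal.ofReal (c * ℓ) := by
              rw [ENNReal.ofReal_rpow_of_nonneg (by positivity) (by norm_num), ← Real.sqrt_eq_rpow,
                Real.sqrt_sq (by positivity)]

lemma setLIntegral_ofReal_mul_sqrt_mul_norm_le {S : Set ℝ} (hSm : MeasurableSet S)
    (hS01 : S ⊆ Ioo 0 1) {h : ℝ → ℂ} (hh : ContinuousOn h S) {u : ℝ → ℝ}
    (hu : AEMeasurable u (volume.restrict S)) {c ℓ : ℝ} (hc : 0 ≤ c) (hℓ : 0 ≤ ℓ)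
    (hu_le : ∀ x ∈ S, |u x| ≤ c) (hS : volume S ≤ ENNReal.ofReal (ℓ ^ 2))
    (hw : wInt (fun r => ‖h r‖ ^ 2 * r) ≠ ⊤) :
    ∫⁻ x in S, ENNReal.ofReal (u x * (√x * ‖h x‖))
      ≤ ENNReal.ofReal (c * ℓ * √(wInt (fun r => ‖h r‖ ^ 2 * r)).toReal) := by
  have hv : AEMeasurable (fun x => √x * ‖h x‖) (volume.restrict S) :=
    Real.continuous_sqrt.aemeasurable.mul (hh.aemeasurable hSm).norm
  have hv_sq : ∫⁻ x in S, ENNReal.ofReal ((√x * ‖h x‖) ^ 2) ≤ wInt (fun r => ‖h r‖ ^ 2 * r) :=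
    calc ∫⁻ x in S, ENNReal.ofReal ((√x * ‖h x‖) ^ 2)
        = ∫⁻ x in S, ENNReal.ofReal (‖h x‖ ^ 2 * x) :=
          setLIntegral_congr_fun hSm fun x hx => by
            rw [mul_pow, Real.sq_sqrt (hS01 hx).1.le, mul_comm]
      _ ≤ wInt (fun r => ‖h r‖ ^ 2 * r) := lintegral_mono_set hS01
  refine (setLIntegral_ofReal_mul_le hSm hu hv hc hℓ hu_le hS).trans ?_
  rw [ENNReal.ofReal_mul (q := √(wInt _).toReal) (mul_nonneg hc hℓ), Real.sqrt_eq_rpow,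
    ← ENNReal.ofReal_rpow_of_nonneg ENNReal.toReal_nonneg (by norm_num), ENNReal.ofReal_toReal hw]
  gcongr

lemma norm_intervalIntegral_le_toReal_setLIntegral {f : ℝ → ℂ} {a b : ℝ} (hab : a ≤ b) :
    ‖∫ s in a..b, f s‖ ≤ (∫⁻ s in Ioo a b, ENNReal.ofReal ‖f s‖).toReal := by
  rw [intervalIntegral.integral_of_le hab, integral_Ioc_eq_integral_Ioo]
  exact norm_integral_le_lintegral_norm f

lemma norm_localizedIntegrand_le (g : ℝ → ℂ) {a s : ℝ} (ha : 0 ≤ a) (hs : s ∈ Ioo a 1) :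
    ‖localizedIntegrand g a s‖
      ≤ √s * (4 * s - 3 * a) * (√s * ‖g s‖)
        + (s - a) ^ 2 * s * √s / 2 * (√s * ‖Lop g s‖) := by
  have hs0 : 0 < s := ha.trans_lt hs.1
  have hss : √s * √s = s := Real.mul_self_sqrt hs0.le
  have hcast : localizedIntegrand g a s
      = (((s - a) ^ 2 / 2 * s ^ 2 : ℝ) : ℂ) * Lop g s - ((s * (4 * s - 3 * a) : ℝ) : ℂ) * g s := by
    rw [localizedIntegrand, eulerOp_eq_sq_mul_Lop g ⟨hs0, hs.2.le⟩]
    push_cast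
    ring
  rw [hcast]
  refine (norm_sub_le _ _).trans_eq ?_
  rw [norm_mul, norm_mul, Complex.norm_real, Complex.norm_real,
    Real.norm_of_nonneg (by positivity : (0 : ℝ) ≤ (s - a) ^ 2 / 2 * s ^ 2),
    Real.norm_of_nonneg (by nlinarith [hs.1] : 0 ≤ s * (4 * s - 3 * a))]
  linear_combination (-(4 * s - 3 * a) * ‖g s‖ - (s - a) ^ 2 * s * ‖Lop g s‖ / 2) * hss

lemma setLIntegral_norm_localizedIntegrand_le {g : ℝ → ℂ} (hg : ContDiffOn ℝ 2 g (Icc 0 1))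
    (hA : wInt (fun r => ‖g r‖ ^ 2 * r) ≠ ⊤) (hB : wInt (fun r => ‖Lop g r‖ ^ 2 * r) ≠ ⊤)
    {t : ℝ} (ht0 : 0 < t) (ht1 : t ≤ 1) :
    ∫⁻ s in Ioo (1 - t ^ 2) 1, ENNReal.ofReal ‖localizedIntegrand g (1 - t ^ 2) s‖
      ≤ ENNReal.ofReal (4 * t * √(wInt (fun r => ‖g r‖ ^ 2 * r)).toReal
        + t ^ 4 / 2 * t * √(wInt (fun r => ‖Lop g r‖ ^ 2 * r)).toReal) := by
  set a := 1 - t ^ 2 with ha_def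
  have ha : a ∈ Ico (0 : ℝ) 1 := ⟨by nlinarith, by nlinarith⟩
  have hvol : volume (Ioo a 1) ≤ ENNReal.ofReal (t ^ 2) := by
    rw [Real.volume_Ioo, ha_def, sub_sub_cancel]
  have hIoo : Ioo a 1 ⊆ Ioo 0 1 := Ioo_subset_Ioo_left ha.1
  have hgc : ContinuousOn g (Ioo a 1) := hg.continuousOn.mono (hIoo.trans Ioo_subset_Icc_self)
  have hterm₁ := setLIntegral_ofReal_mul_sqrt_mul_norm_le measurableSet_Ioo hIoo hgc
    (u := fun s => √s * (4 * s - 3 * a)) (by fun_prop) (by norm_num : (0 : ℝ) ≤ 4) ht0.le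
    (fun s hs => by
      rw [abs_of_nonneg (mul_nonneg (Real.sqrt_nonneg s) (by nlinarith [hs.1, ha.1]))]
      nlinarith [Real.sqrt_le_one.mpr hs.2.le, Real.sqrt_nonneg s, hs.1, hs.2, ha.1]) hvol hA
  have hterm₂ := setLIntegral_ofReal_mul_sqrt_mul_norm_le measurableSet_Ioo hIoo
    ((continuousOn_Lop hg).mono (hIoo.trans Ioo_subset_Ioc_self))
    (u := fun s => (s - a) ^ 2 * s * √s / 2) (by fun_prop) (by positivity : 0 ≤ t ^ 4 / 2) ht0.le
    (fun s hs => by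
      have hs0 : 0 ≤ s := ha.1.trans hs.1.le
      have hsa : (s - a) ^ 2 ≤ t ^ 4 := by nlinarith [hs.1, hs.2]
      have hs1 : s * √s ≤ 1 :=
        mul_le_one₀ hs.2.le (Real.sqrt_nonneg s) (Real.sqrt_le_one.mpr hs.2.le)
      rw [abs_of_nonneg (by positivity), mul_assoc ((s - a) ^ 2)]
      nlinarith [mul_le_mul hsa hs1 (by positivity) (by positivity)]) hvol hB
  have hcont : ContinuousOn (fun s => √s * (4 * s - 3 * a) * (√s * ‖g s‖)) (Ioo a 1) := by
    fun_prop
  calc ∫⁻ s in Ioo a 1, ENNReal.ofReal ‖localizedIntegrand g a s‖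
      ≤ ∫⁻ s in Ioo a 1, (ENNReal.ofReal (√s * (4 * s - 3 * a) * (√s * ‖g s‖))
          + ENNReal.ofReal ((s - a) ^ 2 * s * √s / 2 * (√s * ‖Lop g s‖))) :=
        setLIntegral_mono' measurableSet_Ioo fun s hs =>
          (ENNReal.ofReal_le_ofReal (norm_localizedIntegrand_le g ha.1 hs)).trans
            ENNReal.ofReal_add_le
    _ ≤ _ := by
        rw [lintegral_add_left' (hcont.aemeasurable measurableSet_Ioo).ennreal_ofReal,
          ENNReal.ofReal_add (by positivity) (by positivity)]
        exact add_le_add hterm₁ hterm₂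

section Estimates

variable {g : ℝ → ℂ} (hg : ContDiffOn ℝ 2 g (Icc 0 1)) (h1 : g 1 = 0)
include hg h1

lemma norm_derivWithin_one_le_sqrt_wInt_Lop (hB : wInt (fun r => ‖Lop g r‖ ^ 2 * r) ≠ ⊤) :
    ‖derivWithin g (Icc 0 1) 1‖ ≤ √(wInt (fun r => ‖Lop g r‖ ^ 2 * r)).toReal := by
  have hpt : ∀ s ∈ Ioo (0 : ℝ) 1, ‖eulerOp g s‖ = s * √s * (√s * ‖Lop g s‖) := by
    intro s hs
    rw [eulerOp_eq_sq_mul_Lop g ⟨hs.1, hs.2.le⟩, norm_mul, norm_pow, Complex.norm_real,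
      Real.norm_of_nonneg hs.1.le]
    linear_combination (-s * ‖Lop g s‖) * Real.mul_self_sqrt hs.1.le
  have hbound : ∫⁻ s in Ioo (0 : ℝ) 1, ENNReal.ofReal ‖eulerOp g s‖
      ≤ ENNReal.ofReal (1 * 1 * √(wInt (fun r => ‖Lop g r‖ ^ 2 * r)).toReal) := by
    rw [setLIntegral_congr_fun measurableSet_Ioo fun s hs => by rw [hpt s hs]]
    refine setLIntegral_ofReal_mul_sqrt_mul_norm_le measurableSet_Ioo subset_rfl
      ((continuousOn_Lop hg).mono Ioo_subset_Ioc_self) (by fun_prop) zero_le_one zero_le_one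
      (fun s hs => ?_) (by simp) hB
    rw [abs_of_nonneg (mul_nonneg hs.1.le (Real.sqrt_nonneg s))]
    nlinarith [Real.sqrt_le_one.mpr hs.2.le, Real.sqrt_nonneg s, hs.1, hs.2]
  calc ‖derivWithin g (Icc 0 1) 1‖ = ‖∫ s in (0 : ℝ)..1, eulerOp g s‖ := by
        rw [integral_eulerOp hg h1]
    _ ≤ (∫⁻ s in Ioo (0 : ℝ) 1, ENNReal.ofReal ‖eulerOp g s‖).toReal :=
        norm_intervalIntegral_le_toReal_setLIntegral zero_le_one
    _ ≤ 1 * 1 * √(wInt (fun r => ‖Lop g r‖ ^ 2 * r)).toReal :=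
        ENNReal.toReal_le_of_le_ofReal (by positivity) hbound
    _ = √(wInt (fun r => ‖Lop g r‖ ^ 2 * r)).toReal := by ring

lemma norm_derivWithin_one_le (hA : wInt (fun r => ‖g r‖ ^ 2 * r) ≠ ⊤)
    (hB : wInt (fun r => ‖Lop g r‖ ^ 2 * r) ≠ ⊤) {t : ℝ} (ht : t ∈ Ioc (0 : ℝ) 1) :
    ‖derivWithin g (Icc 0 1) 1‖
      ≤ 8 * √(wInt (fun r => ‖g r‖ ^ 2 * r)).toReal / t ^ 3
        + t * √(wInt (fun r => ‖Lop g r‖ ^ 2 * r)).toReal := by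
  obtain ⟨ht0, ht1⟩ := ht
  have ha : 1 - t ^ 2 ∈ Ico (0 : ℝ) 1 := ⟨by nlinarith, by nlinarith⟩
  have hmain : t ^ 4 / 2 * ‖derivWithin g (Icc 0 1) 1‖
      ≤ 4 * t * √(wInt (fun r => ‖g r‖ ^ 2 * r)).toReal
        + t ^ 4 / 2 * t * √(wInt (fun r => ‖Lop g r‖ ^ 2 * r)).toReal :=
    calc t ^ 4 / 2 * ‖derivWithin g (Icc 0 1) 1‖
        = ‖∫ s in (1 - t ^ 2)..1, localizedIntegrand g (1 - t ^ 2) s‖ := by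
          rw [integral_localizedIntegrand hg h1 ha]
          push_cast
          rw [sub_sub_cancel]
          simp [abs_of_pos ht0, ← pow_mul]
      _ ≤ (∫⁻ s in Ioo (1 - t ^ 2) 1, ENNReal.ofReal ‖localizedIntegrand g (1 - t ^ 2) s‖).toReal :=
          norm_intervalIntegral_le_toReal_setLIntegral ha.2.le
      _ ≤ _ := ENNReal.toReal_le_of_le_ofReal (by positivity)
          (setLIntegral_norm_localizedIntegrand_le hg hA hB ht0 ht1)
  rw [← le_div_iff₀' (by positivity)] at hmain
  refine hmain.trans_eq ?_
  field_simp
  ring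

end Estimates

lemma wInt_ne_top {h : ℝ → ℂ} (hh : ContinuousOn h (Icc 0 1)) :
    wInt (fun r => ‖h r‖ ^ 2 * r) ≠ ⊤ := by
  have hcont : ContinuousOn (fun r : ℝ => ‖h r‖ ^ 2 * r) (Icc 0 1) := by fun_prop
  exact ((hcont.integrableOn_Icc).mono_set Ioo_subset_Icc_self).lintegral_lt_top.ne

lemma eqOn_zero_of_wInt_eq_zero {h : ℝ → ℂ} (hh : ContinuousOn h (Ioo 0 1))
    (hw : wInt (fun r => ‖h r‖ ^ 2 * r) = 0) : EqOn h 0 (Ioo 0 1) := by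
  have hcont : ContinuousOn (fun r => ENNReal.ofReal (‖h r‖ ^ 2 * r)) (Ioo 0 1) :=
    ENNReal.continuous_ofReal.comp_continuousOn (by fun_prop)
  have hae := (lintegral_eq_zero_iff' (hcont.aemeasurable measurableSet_Ioo)).mp hw
  intro r hr
  have hr0 := Measure.eqOn_open_of_ae_eq hae isOpen_Ioo hcont continuousOn_const hr
  have hr0' : ‖h r‖ ^ 2 * r ≤ 0 := ENNReal.ofReal_eq_zero.mp hr0
  have : ‖h r‖ ^ 2 ≤ 0 := nonpos_of_mul_nonpos_left hr0' hr.1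
  simpa using this

lemma derivWithin_one_eq_zero_of_wInt_eq_zero {g : ℝ → ℂ} (hg : ContinuousOn g (Icc 0 1))
    (h1 : g 1 = 0) (hw : wInt (fun r => ‖g r‖ ^ 2 * r) = 0) : derivWithin g (Icc 0 1) 1 = 0 := by
  have hzero : EqOn g 0 (Ioc 0 1) := fun r hr => by
    rcases hr.2.lt_or_eq with hr1 | rfl
    · exact eqOn_zero_of_wInt_eq_zero (hg.mono Ioo_subset_Icc_self) hw ⟨hr.1, hr1⟩
    · exact h1
  rw [← dz_eq_derivWithin_Icc g one_pos, dz, derivWithin_congr hzero h1, derivWithin_zero]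
  rfl

/-- The two bounds are balanced at `t = 2 a^{1/8} / b^{1/8}`, which is admissible iff
`b ≥ 256 a`; otherwise the first bound already suffices. -/
lemma le_two_mul_sqrt_three_mul_rpow {N a b : ℝ} (ha : 0 < a) (hb : 0 ≤ b) (h₁ : N ≤ √b)
    (h₂ : ∀ t ∈ Ioc (0 : ℝ) 1, N ≤ 8 * √a / t ^ 3 + t * √b) :
    N ≤ 2 * √3 * a ^ (1 / 8 : ℝ) * b ^ (3 / 8 : ℝ) := by
  obtain ⟨x, hx, rfl⟩ : ∃ x, 0 < x ∧ a = x ^ 8 :=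
    ⟨a ^ (8⁻¹ : ℝ), by positivity, (Real.rpow_inv_natCast_pow ha.le (by norm_num)).symm⟩
  obtain ⟨y, hy, rfl⟩ : ∃ y, 0 ≤ y ∧ b = y ^ 8 :=
    ⟨b ^ (8⁻¹ : ℝ), by positivity, (Real.rpow_inv_natCast_pow hb (by norm_num)).symm⟩
  have hsqrt : ∀ z : ℝ, √(z ^ 8) = z ^ 4 := fun z => by
    rw [show z ^ 8 = (z ^ 4) ^ 2 by ring, Real.sqrt_sq (by positivity)]
  have hx8 : (x ^ 8) ^ (1 / 8 : ℝ) = x := by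
    rw [one_div]; exact_mod_cast Real.pow_rpow_inv_natCast hx.le (by norm_num : 8 ≠ 0)
  have hy8 : (y ^ 8) ^ (3 / 8 : ℝ) = y ^ 3 := by
    rw [← Real.rpow_natCast, ← Real.rpow_mul hy]; norm_num
  simp only [hsqrt] at h₁ h₂
  rw [hx8, hy8]
  have h3 : 3 ≤ 2 * √3 := by
    nlinarith [Real.sq_sqrt (show (0 : ℝ) ≤ 3 by norm_num), Real.sqrt_nonneg 3]
  rcases le_or_gt y (2 * x) with hyx | hxy
  · calc N ≤ y * y ^ 3 := by linarith [show y ^ 4 = y * y ^ 3 by ring]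
      _ ≤ 2 * x * y ^ 3 := by gcongr
      _ ≤ 2 * √3 * x * y ^ 3 := by nlinarith [mul_nonneg hx.le (pow_nonneg hy 3)]
  · have hy0 : 0 < y := by linarith
    have ht := h₂ (2 * x / y) ⟨by positivity, (div_le_one hy0).mpr hxy.le⟩
    have : 8 * x ^ 4 / (2 * x / y) ^ 3 + 2 * x / y * y ^ 4 = 3 * (x * y ^ 3) := by
      field_simp; ring
    nlinarith [mul_pos hx (pow_pos hy0 3)]

theorem boundary_estimate_dirichlet_general (g : ℝ → ℂ) (hg : ContDiffOn ℝ 3 g (Set.Icc 0 1))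
    (h1 : g 1 = 0) :
    ENNReal.ofReal ‖dz (fun s => (s : ℂ) * g s) 1‖
      ≤ ENNReal.ofReal (2 * Real.sqrt 3)
          * (wInt (fun r => ‖g r‖ ^ 2 * r)) ^ ((1 : ℝ) / 8)
          * (wInt (fun r => ‖Lop g r‖ ^ 2 * r)) ^ ((3 : ℝ) / 8) := by
  have hg2 : ContDiffOn ℝ 2 g (Icc 0 1) := hg.of_le (by norm_num)
  rw [dz_ofReal_mul_one ((hg2.differentiableOn (by norm_num)) 1 (by simp)) h1]
  rcases eq_or_ne (wInt (fun r => ‖g r‖ ^ 2 * r)) 0 with hA0 | hA0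
  · simp [derivWithin_one_eq_zero_of_wInt_eq_zero hg2.continuousOn h1 hA0]
  rcases eq_or_ne (wInt (fun r => ‖Lop g r‖ ^ 2 * r)) ⊤ with hB | hB
  · rw [hB, ENNReal.top_rpow_of_pos (by norm_num), ENNReal.mul_top]
    · exact le_top
    · exact mul_ne_zero (by simp) (by simp [hA0])
  have hA := wInt_ne_top hg2.continuousOn
  rw [← ENNReal.ofReal_toReal hA, ← ENNReal.ofReal_toReal hB,
    ENNReal.ofReal_rpow_of_nonneg ENNReal.toReal_nonneg (by norm_num),
    ENNReal.ofReal_rpow_of_nonneg ENNReal.toReal_nonneg (by norm_num),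
    ← ENNReal.ofReal_mul (by positivity), ← ENNReal.ofReal_mul (by positivity)]
  exact ENNReal.ofReal_le_ofReal <| le_two_mul_sqrt_three_mul_rpow
    (ENNReal.toReal_pos hA0 hA) ENNReal.toReal_nonneg
    (norm_derivWithin_one_le_sqrt_wInt_Lop hg2 h1 hB) (fun t => norm_derivWithin_one_le hg2 h1 hA hB)

/-- Lemma A.2, estimate (estLinfty1): for `g` three times continuously differentiable
on `[0,1]` with `g(0) = g(1) = 0`,
`|(d/dr)(r g)(1)| ≤ 2√3 (∫₀¹ |g|² r dr)^{1/8} (∫₀¹ |𝓛g|² r dr)^{3/8}`,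
the second integral possibly `+∞`. -/
theorem boundary_estimate_dirichlet (g : ℝ → ℂ) (hg : ContDiffOn ℝ 3 g (Set.Icc 0 1))
    (h0 : g 0 = 0) (h1 : g 1 = 0) :
    ENNReal.ofReal ‖dz (fun s => (s : ℂ) * g s) 1‖
      ≤ ENNReal.ofReal (2 * Real.sqrt 3)
          * (wInt (fun r => ‖g r‖ ^ 2 * r)) ^ ((1 : ℝ) / 8)
          * (wInt (fun r => ‖Lop g r‖ ^ 2 * r)) ^ ((3 : ℝ) / 8) :=
  boundary_estimate_dirichlet_general g hg h1
end

section
/- There exists a constant C > 0 such that for every complex-valued continuously differentiable function g on [0,1] with g(0) = 0, one has ∫₀¹ |g(r)|²·r dr ≤ C·∫₀¹ |(d/dr)(r·g(r))|²·((1−r²)/r) dr. (Lemma A.3, a Hardy–Littlewood–Pólya type inequality.) -/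
/-!
Put `f(r) = r g(r)`, so `f(0) = 0`. The fundamental theorem of calculus and Cauchy–Schwarz
with the weight `(1 - s²)/s` give `|f(r)|² ≤ I · ∫₀^r s/(1 - s²) ds ≤ I · (-log(1 - r))`, where
`I` is the right-hand integral. Dividing by `r`,
`|g(r)|² r ≤ I · (-log(1 - r))/r ≤ 2 I (1 - r)^(-1/2)`, whose integral over `(0,1)` is `4 I`.
-/

open MeasureTheory Filter

open Set Real
open scoped ENNReal

theorem ENNReal.sq_lintegral_mul_le {α : Type*} [MeasurableSpace α] {μ : Measure α}
    {f g : α → ℝ≥0∞} (hf : AEMeasurable f μ) (hg : AEMeasurable g μ) :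
    (∫⁻ a, f a * g a ∂μ) ^ 2 ≤ (∫⁻ a, f a ^ 2 ∂μ) * ∫⁻ a, g a ^ 2 ∂μ := by
  have hsq (x : ℝ≥0∞) : (x ^ (1 / 2 : ℝ)) ^ 2 = x := by
    simpa using ENNReal.rpow_inv_rpow two_ne_zero x
  have := pow_le_pow_left' (ENNReal.lintegral_mul_le_Lp_mul_Lq μ .two_two hf hg) 2
  simpa only [Pi.mul_apply, mul_pow, hsq, ENNReal.rpow_two] using this

theorem sq_lintegral_enorm_le_lintegral_mul_lintegral_inv {α E : Type*} [MeasurableSpace α]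
    {μ : Measure α} [NormedAddCommGroup E] {u : α → E} {w : α → ℝ}
    (hu : AEStronglyMeasurable u μ) (hw : AEMeasurable w μ) (hw_pos : ∀ᵐ a ∂μ, 0 < w a) :
    (∫⁻ a, ‖u a‖ₑ ∂μ) ^ 2 ≤
      (∫⁻ a, ENNReal.ofReal (‖u a‖ ^ 2 * w a) ∂μ) * ∫⁻ a, ENNReal.ofReal (w a)⁻¹ ∂μ := by
  have hsqrt := hw.sqrt
  have key := ENNReal.sq_lintegral_mul_le (μ := μ)
    (f := fun a => ENNReal.ofReal (‖u a‖ * √(w a))) (g := fun a => ENNReal.ofReal (√(w a))⁻¹)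
    (hu.norm.aemeasurable.mul hsqrt).ennreal_ofReal hsqrt.inv.ennreal_ofReal
  convert key using 2
  · refine lintegral_congr_ae (hw_pos.mono fun a ha => ?_)
    dsimp only
    rw [← ENNReal.ofReal_mul (by positivity), mul_assoc,
      mul_inv_cancel₀ (Real.sqrt_pos.2 ha).ne', mul_one, ofReal_norm]
  · refine lintegral_congr_ae (hw_pos.mono fun a ha => ?_)
    dsimp only
    rw [← ENNReal.ofReal_pow (by positivity), mul_pow, Real.sq_sqrt ha.le]
  · refine lintegral_congr_ae (hw_pos.mono fun a ha => ?_)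
    dsimp only
    rw [← ENNReal.ofReal_pow (by positivity), inv_pow, Real.sq_sqrt ha.le]

theorem enorm_sub_sq_le_lintegral_deriv_sq_mul {E : Type*} [NormedAddCommGroup E]
    [NormedSpace ℝ E] [CompleteSpace E] {f : ℝ → E} {a b : ℝ} {w : ℝ → ℝ}
    (hf : ContDiffOn ℝ 1 f (Icc a b)) (hab : a ≤ b) (hw : Measurable w)
    (hw_pos : ∀ x ∈ Ioo a b, 0 < w x) :
    ‖f b - f a‖ₑ ^ 2 ≤ (∫⁻ x in Ioo a b, ENNReal.ofReal (‖deriv f x‖ ^ 2 * w x)) *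
      ∫⁻ x in Ioo a b, ENNReal.ofReal (w x)⁻¹ := by
  calc ‖f b - f a‖ₑ ^ 2 ≤ (∫⁻ x in Ioo a b, ‖deriv f x‖ₑ) ^ 2 := by
        rw [restrict_Ioo_eq_restrict_Icc]
        gcongr
        exact enorm_sub_le_lintegral_deriv_of_contDiffOn_Icc hf hab
    _ ≤ _ := sq_lintegral_enorm_le_lintegral_mul_lintegral_inv (aestronglyMeasurable_deriv f _)
        hw.aemeasurable ((ae_restrict_iff' measurableSet_Ioo).2 (.of_forall hw_pos))

theorem lintegral_Ioo_inv_one_sub {r : ℝ} (hr0 : 0 ≤ r) (hr1 : r < 1) :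
    ∫⁻ s in Ioo 0 r, ENNReal.ofReal (1 - s)⁻¹ = ENNReal.ofReal (-log (1 - r)) := by
  have hcont : ContinuousOn (fun s : ℝ => (1 - s)⁻¹) (Icc 0 r) :=
    (continuousOn_const.sub continuousOn_id).inv₀ fun s hs =>
      (show (0 : ℝ) < 1 - s by linarith [hs.2]).ne'
  rw [← ofReal_integral_eq_lintegral_ofReal (hcont.integrableOn_Icc.mono_set Ioo_subset_Icc_self)
    ((ae_restrict_iff' measurableSet_Ioo).2
      (.of_forall fun s hs => inv_nonneg.2 (by linarith [hs.2]))),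
    ← integral_Ioc_eq_integral_Ioo, ← intervalIntegral.integral_of_le hr0,
    intervalIntegral.integral_comp_sub_left (fun x => x⁻¹), sub_zero,
    integral_inv_of_pos (by linarith) one_pos, one_div, log_inv]

theorem neg_log_one_sub_le {r : ℝ} (hr0 : 0 ≤ r) (hr1 : r < 1) :
    -log (1 - r) ≤ 2 * r * (1 - r) ^ (-(1 / 2) : ℝ) := by
  have h1r : 0 < 1 - r := by linarith
  set y := √(1 - r) with hy_def
  have hy : 0 < y := sqrt_pos.2 h1r
  have hy2 : y ^ 2 = 1 - r := sq_sqrt h1r.le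
  have hy1 : y ≤ 1 := by nlinarith
  have hlog : log (1 - r) = 2 * log y := by rw [hy_def, log_sqrt h1r.le]; ring
  have hrpow : (1 - r) ^ (-(1 / 2) : ℝ) = y⁻¹ := by rw [rpow_neg h1r.le, ← sqrt_eq_rpow]
  -- `-log (1 - r) = -2 log y ≤ 2 (1 - y) / y ≤ 2 (1 - y²) / y = 2 r / y`
  have hylog : y - 1 ≤ y * log y := by
    have := mul_le_mul_of_nonneg_left (one_sub_inv_le_log_of_pos hy) hy.le
    rwa [mul_sub, mul_one, mul_inv_cancel₀ hy.ne'] at this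
  rw [hrpow, hlog, ← div_eq_mul_inv, le_div_iff₀ hy]
  nlinarith

theorem lintegral_Ioo_div_one_sub_sq_le {r : ℝ} (hr0 : 0 ≤ r) (hr1 : r < 1) :
    ∫⁻ s in Ioo 0 r, ENNReal.ofReal (s / (1 - s ^ 2)) ≤
      ENNReal.ofReal r * ENNReal.ofReal (2 * (1 - r) ^ (-(1 / 2) : ℝ)) := by
  calc ∫⁻ s in Ioo 0 r, ENNReal.ofReal (s / (1 - s ^ 2))
      ≤ ∫⁻ s in Ioo 0 r, ENNReal.ofReal (1 - s)⁻¹ := by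
        refine setLIntegral_mono' measurableSet_Ioo fun s hs => ENNReal.ofReal_le_ofReal ?_
        have h1s : 0 < 1 - s := by linarith [hs.2]
        rw [div_le_iff₀ (by nlinarith [hs.1]), inv_mul_eq_div, le_div_iff₀ h1s]
        nlinarith [hs.1]
    _ = ENNReal.ofReal (-log (1 - r)) := lintegral_Ioo_inv_one_sub hr0 hr1
    _ ≤ ENNReal.ofReal r * ENNReal.ofReal (2 * (1 - r) ^ (-(1 / 2) : ℝ)) := by
        rw [← ENNReal.ofReal_mul hr0, ← mul_assoc, mul_comm r 2]
        exact ENNReal.ofReal_le_ofReal (neg_log_one_sub_le hr0 hr1)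

theorem lintegral_Ioo_two_mul_one_sub_rpow :
    ∫⁻ r in Ioo (0 : ℝ) 1, ENNReal.ofReal (2 * (1 - r) ^ (-(1 / 2) : ℝ)) = ENNReal.ofReal 4 := by
  have hint : IntervalIntegrable (fun r : ℝ => 2 * (1 - r) ^ (-(1 / 2) : ℝ)) volume 0 1 := by
    have := ((intervalIntegral.intervalIntegrable_rpow' (a := 0) (b := 1) (r := -(1 / 2))
      (by norm_num)).const_mul 2).comp_sub_left 1
    simpa using this.symm
  rw [← ofReal_integral_eq_lintegral_ofReal
    ((intervalIntegrable_iff_integrableOn_Ioo_of_le zero_le_one).1 hint)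
    ((ae_restrict_iff' measurableSet_Ioo).2 (.of_forall fun r hr => by
      have := sub_pos.2 hr.2; positivity)),
    ← integral_Ioc_eq_integral_Ioo, ← intervalIntegral.integral_of_le zero_le_one,
    intervalIntegral.integral_comp_sub_left (fun x => 2 * x ^ (-(1 / 2) : ℝ)),
    intervalIntegral.integral_const_mul, integral_rpow (.inl (by norm_num))]
  norm_num

theorem dz_eq_deriv {f : ℝ → ℂ} {x : ℝ} (hx : x ∈ Ioo 0 1) : dz f x = deriv f x :=
  derivWithin_of_mem_nhds (Ioc_mem_nhds hx.1 hx.2)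

theorem ofReal_norm_sq_mul_le_wInt_mul {g : ℝ → ℂ} (hg : ContDiffOn ℝ 1 g (Icc 0 1))
    (hg0 : g 0 = 0) {r : ℝ} (hr : r ∈ Ioo 0 1) :
    ENNReal.ofReal (‖g r‖ ^ 2 * r) ≤
      wInt (fun s => ‖dz (fun s => (s : ℂ) * g s) s‖ ^ 2 * ((1 - s ^ 2) / s)) *
        ENNReal.ofReal (2 * (1 - r) ^ (-(1 / 2) : ℝ)) := by
  obtain ⟨hr0, hr1⟩ := hr
  set f : ℝ → ℂ := fun s => (s : ℂ) * g s
  have hf : ContDiffOn ℝ 1 f (Icc 0 r) :=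
    (Complex.ofRealCLM.contDiff.contDiffOn.mul hg).mono (Icc_subset_Icc_right hr1.le)
  have hcs := enorm_sub_sq_le_lintegral_deriv_sq_mul hf hr0.le (w := fun s => (1 - s ^ 2) / s)
    (by fun_prop) fun s hs => div_pos (by nlinarith [hs.1, hs.2]) hs.1
  have hderiv : ∫⁻ s in Ioo 0 r, ENNReal.ofReal (‖deriv f s‖ ^ 2 * ((1 - s ^ 2) / s)) ≤
      wInt (fun s => ‖dz f s‖ ^ 2 * ((1 - s ^ 2) / s)) :=
    (lintegral_mono_set (Ioo_subset_Ioo_right hr1.le)).trans_eq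
      (setLIntegral_congr_fun measurableSet_Ioo fun s hs => by simp only [dz_eq_deriv hs])
  have hweight : ∫⁻ s in Ioo 0 r, ENNReal.ofReal ((1 - s ^ 2) / s)⁻¹ ≤
      ENNReal.ofReal r * ENNReal.ofReal (2 * (1 - r) ^ (-(1 / 2) : ℝ)) := by
    simpa only [inv_div] using lintegral_Ioo_div_one_sub_sq_le hr0.le hr1
  have hfr : ‖f r - f 0‖ₑ ^ 2 = ENNReal.ofReal (‖g r‖ ^ 2 * r) * ENNReal.ofReal r := by
    rw [← ofReal_norm, ← ENNReal.ofReal_pow (norm_nonneg _), ← ENNReal.ofReal_mul (by positivity)]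
    congr 1
    simp only [f, Complex.ofReal_zero, hg0, mul_zero, sub_zero, Complex.norm_mul,
      Complex.norm_real, Real.norm_eq_abs, abs_of_pos hr0]
    ring
  rw [← ENNReal.mul_le_mul_iff_left (c := ENNReal.ofReal r) (by simpa using hr0)
    ENNReal.ofReal_ne_top, ← hfr]
  calc ‖f r - f 0‖ₑ ^ 2 ≤ _ := hcs
    _ ≤ _ := mul_le_mul' hderiv hweight
    _ = _ := by ring

/-- Lemma A.3, a Hardy–Littlewood–Pólya type inequality: there is `C > 0` such that
for every `g` continuously differentiable on `[0,1]` with `g(0) = 0`,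
`∫₀¹ |g|² r dr ≤ C ∫₀¹ |(d/dr)(r g)|² (1−r²)/r dr`. -/
theorem hardy_littlewood_polya_type :
    ∃ C : ℝ, 0 < C ∧ ∀ g : ℝ → ℂ, ContDiffOn ℝ 1 g (Set.Icc 0 1) → g 0 = 0 →
      wInt (fun r => ‖g r‖ ^ 2 * r)
        ≤ ENNReal.ofReal C
            * wInt (fun r => ‖dz (fun s => (s : ℂ) * g s) r‖ ^ 2 * ((1 - r ^ 2) / r)) := by
  refine ⟨4, by norm_num, fun g hg hg0 => ?_⟩
  set I := wInt (fun r => ‖dz (fun s => (s : ℂ) * g s) r‖ ^ 2 * ((1 - r ^ 2) / r))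
  rcases eq_or_ne I ⊤ with hI | hI
  · simp [hI]
  calc wInt (fun r => ‖g r‖ ^ 2 * r)
      ≤ ∫⁻ r in Ioo 0 1, I * ENNReal.ofReal (2 * (1 - r) ^ (-(1 / 2) : ℝ)) :=
        setLIntegral_mono' measurableSet_Ioo fun r hr => ofReal_norm_sq_mul_le_wInt_mul hg hg0 hr
    _ = ENNReal.ofReal 4 * I := by
        rw [lintegral_const_mul' _ _ hI, lintegral_Ioo_two_mul_one_sub_rpow, mul_comm]
end
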